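/- arXiv:2003.08190 — 2 statements merged into one kernel-verified Lean document; each statement's English description precedes it below -/
import Mathlib

section
/- Let T be the triangle with vertices (0,0), (s, 0), (s, t) for s, t > 0, and let P be the triangle {(u,v) : 0 < u < s, 0 < v < (t/s)·u}. Then ∫_{(u,v)∈P} area(T ∩ (T + (u,v))) du dv = (1/6)·area(T)² = s²t²/24. -/
/-!
In the coordinates of the statement, `T` is the region `0 ≤ x ≤ s, 0 ≤ y ≤ (t/s) x`. For
`w = (u, v) ∈ P` the overlap `T ∩ (T + w)` is the right triangle with corner `w`, hypotenuse
still of slope `t/s` and horizontal leg `s - u`, so its area is `(t/s) (s - u)² / 2`. The vertical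
section of `P` above `u` has length `(t/s) u`, and Fubini gives
`∫₀ˢ (t/s) u · (t/s) (s - u)² / 2 du = s² t² / 24 = area(T)² / 6`.
-/

open MeasureTheory Set

/-- The right triangle with vertices `(a, c)`, `(b, c)`, `(b, c + m (b - a))`. -/
def rightTriangle (a b c m : ℝ) : Set (ℝ × ℝ) :=
  {p | p.1 ∈ Icc a b ∧ p.2 ∈ Icc c (c + m * (p.1 - a))}

theorem convex_rightTriangle (a b c m : ℝ) : Convex ℝ (rightTriangle a b c m) := by
  rintro p ⟨⟨hp₁, hp₂⟩, hp₃, hp₄⟩ q ⟨⟨hq₁, hq₂⟩, hq₃, hq₄⟩ x y hx hy hxy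
  simp only [rightTriangle, mem_ofPred_eq, mem_Icc, Prod.fst_add, Prod.snd_add, Prod.smul_fst,
    Prod.smul_snd, smul_eq_mul]
  obtain rfl : y = 1 - x := by linarith
  refine ⟨⟨?_, ?_⟩, ?_, ?_⟩
  · linarith [mul_le_mul_of_nonneg_left hp₁ hx, mul_le_mul_of_nonneg_left hq₁ hy]
  · linarith [mul_le_mul_of_nonneg_left hp₂ hx, mul_le_mul_of_nonneg_left hq₂ hy]
  · linarith [mul_le_mul_of_nonneg_left hp₃ hx, mul_le_mul_of_nonneg_left hq₃ hy]
  · linarith [mul_le_mul_of_nonneg_left hp₄ hx, mul_le_mul_of_nonneg_left hq₄ hy]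

theorem convexHull_eq_rightTriangle {s t : ℝ} (hs : 0 < s) (ht : 0 < t) :
    convexHull ℝ {(0, 0), (s, 0), (s, t)} = rightTriangle 0 s 0 (t / s) := by
  refine (convexHull_min ?_ (convex_rightTriangle _ _ _ _)).antisymm ?_
  · have : t / s * s = t := div_mul_cancel₀ t hs.ne'
    rintro p (rfl | rfl | rfl) <;> simp [rightTriangle, hs.le, ht.le, this]
  · rintro ⟨x, y⟩ ⟨⟨hx₀, hxs⟩, hy₀, hyx⟩
    have hyx' : y / t ≤ x / s := by
      rw [zero_add, sub_zero] at hyx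
      rw [div_le_iff₀ ht]
      linarith [show t / s * x = x / s * t by ring]
    -- barycentric coordinates of `(x, y)`
    refine mem_convexHull_of_exists_fintype ![1 - x / s, x / s - y / t, y / t]
      ![(0, 0), (s, 0), (s, t)] (fun i => ?_) ?_ (fun i => ?_) ?_
    · fin_cases i <;> simp [div_le_one hs, hxs, hyx', div_nonneg hy₀ ht.le]
    · simp [Fin.sum_univ_three]
    · fin_cases i <;> simp
    · simp only [Fin.sum_univ_three]
      ext <;> simp <;> field_simp
      ring

theorem rightTriangle_inter_image_add (a b c m : ℝ) {w : ℝ × ℝ} (hw₁ : 0 ≤ w.1)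
    (hw₂ : 0 ≤ w.2) (hw : w.2 ≤ m * w.1) :
    rightTriangle a b c m ∩ (fun p => p + w) '' rightTriangle a b c m
      = rightTriangle (a + w.1) b (c + w.2) m := by
  ext ⟨x, y⟩
  simp only [image_add_right, rightTriangle, mem_inter_iff, mem_preimage, mem_ofPred_eq, mem_Icc,
    Prod.fst_add, Prod.snd_add, Prod.fst_neg, Prod.snd_neg]
  constructor
  · rintro ⟨⟨⟨-, hxb⟩, -, -⟩, ⟨hxa, -⟩, hyc, hy⟩
    exact ⟨⟨by linarith, hxb⟩, by linarith, by linarith⟩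
  · rintro ⟨⟨hxa, hxb⟩, hyc, hy⟩
    exact ⟨⟨⟨by linarith, hxb⟩, by linarith, by linarith⟩, ⟨by linarith, by linarith⟩,
      by linarith, by linarith⟩

theorem volume_region_between_cc_eq_lintegral {α : Type*} [MeasurableSpace α] {μ : Measure α}
    [SFinite μ] {f g : α → ℝ} {s : Set α} (hf : Measurable f) (hg : Measurable g)
    (hs : MeasurableSet s) :
    μ.prod volume {p : α × ℝ | p.1 ∈ s ∧ p.2 ∈ Icc (f p.1) (g p.1)}
      = ∫⁻ x in s, ENNReal.ofReal (g x - f x) ∂μ := by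
  classical
  rw [Measure.prod_apply (measurableSet_region_between_cc hf hg hs), ← lintegral_indicator hs]
  congr 1 with x
  by_cases hx : x ∈ s
  · have : Prod.mk x ⁻¹' {p : α × ℝ | p.1 ∈ s ∧ p.2 ∈ Icc (f p.1) (g p.1)} = Icc (f x) (g x) := by
      ext; simp [hx]
    rw [this, Real.volume_Icc, indicator_of_mem hx]
  · simp [hx, preimage]

theorem volume_rightTriangle {a b : ℝ} (c : ℝ) {m : ℝ} (hab : a ≤ b) (hm : 0 ≤ m) :
    volume (rightTriangle a b c m) = ENNReal.ofReal (m * (b - a) ^ 2 / 2) := by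
  rw [Measure.volume_eq_prod]
  refine (volume_region_between_cc_eq_lintegral (f := fun _ => c) (g := fun x => c + m * (x - a))
    measurable_const (by fun_prop) measurableSet_Icc).trans ?_
  rw [← ofReal_integral_eq_lintegral_ofReal]
  · rw [integral_Icc_eq_integral_Ioc, ← intervalIntegral.integral_of_le hab]
    simp only [add_sub_cancel_left]
    rw [intervalIntegral.integral_comp_sub_right (fun x => m * x),
      intervalIntegral.integral_const_mul, integral_id]
    ring_nf
  · exact Continuous.integrableOn_Icc (by fun_prop)
  · filter_upwards [ae_restrict_mem measurableSet_Icc] with x hx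
    simpa using mul_nonneg hm (sub_nonneg.2 hx.1)

theorem setIntegral_regionBetween_comp_fst {α E : Type*} [MeasurableSpace α] {μ : Measure α}
    [SFinite μ] [NormedAddCommGroup E] [NormedSpace ℝ E] [CompleteSpace E] {f g : α → ℝ}
    {s : Set α} (hf : Measurable f) (hg : Measurable g) (hs : MeasurableSet s)
    (hfg : ∀ x ∈ s, f x ≤ g x) {F : α → E}
    (hF : IntegrableOn (fun p : α × ℝ => F p.1) (regionBetween f g s) (μ.prod volume)) :
    ∫ p in regionBetween f g s, F p.1 ∂μ.prod volume = ∫ x in s, (g x - f x) • F x ∂μ := by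
  have hR := measurableSet_regionBetween hf hg hs
  rw [← integral_indicator hR, integral_prod _ ((integrable_indicator_iff hR).2 hF),
    ← integral_indicator hs]
  congr 1 with x
  by_cases hx : x ∈ s
  · have : (fun y => (regionBetween f g s).indicator (fun p => F p.1) (x, y))
        = (Ioo (f x) (g x)).indicator fun _ => F x := by
      ext y
      simp [regionBetween, indicator, hx]
    rw [this, integral_indicator_const _ measurableSet_Ioo, Real.volume_real_Ioo_of_le (hfg x hx),
      indicator_of_mem hx]
  · simp [regionBetween, indicator, hx]

theorem integral_mul_sub_sq (a : ℝ) : ∫ x in (0 : ℝ)..a, x * (a - x) ^ 2 = a ^ 4 / 12 := by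
  have hexpand : (fun x : ℝ => x * (a - x) ^ 2) = fun x => a ^ 2 * x - 2 * a * x ^ 2 + x ^ 3 := by
    ext x; ring
  have hint {f : ℝ → ℝ} (hf : Continuous f) : IntervalIntegrable f volume 0 a :=
    hf.intervalIntegrable _ _
  simp only [hexpand]
  rw [intervalIntegral.integral_add (hint (by fun_prop)) (hint (by fun_prop)),
    intervalIntegral.integral_sub (hint (by fun_prop)) (hint (by fun_prop)),
    intervalIntegral.integral_const_mul, intervalIntegral.integral_const_mul, integral_id,
    integral_pow, integral_pow]
  ring

theorem setIntegral_regionBetween_mul_sub_sq {s m : ℝ} (hs : 0 ≤ s) (hm : 0 ≤ m) :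
    ∫ w in regionBetween 0 (fun x => m * x) (Ioo 0 s), m * (s - w.1) ^ 2 / 2
      = m ^ 2 * s ^ 4 / 24 := by
  have hsub : regionBetween 0 (fun x => m * x) (Ioo 0 s) ⊆ Icc 0 s ×ˢ Icc 0 (m * s) :=
    fun w ⟨⟨hw₁, hws⟩, hw₂, hw⟩ =>
      ⟨⟨hw₁.le, hws.le⟩, hw₂.le, hw.le.trans (mul_le_mul_of_nonneg_left hws.le hm)⟩
  have hint : IntegrableOn (fun w : ℝ × ℝ => m * (s - w.1) ^ 2 / 2)
      (regionBetween 0 (fun x => m * x) (Ioo 0 s)) :=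
    (ContinuousOn.integrableOn_compact (isCompact_Icc.prod isCompact_Icc)
      (by fun_prop)).mono_set hsub
  rw [Measure.volume_eq_prod] at hint ⊢
  calc _ = ∫ x in Ioo 0 s, (m * x - 0) * (m * (s - x) ^ 2 / 2) :=
        setIntegral_regionBetween_comp_fst (f := 0) (g := fun x => m * x)
          (F := fun u => m * (s - u) ^ 2 / 2) measurable_const (by fun_prop) measurableSet_Ioo
          (fun x hx => mul_nonneg hm hx.1.le) hint
    _ = m ^ 2 / 2 * ∫ x in (0 : ℝ)..s, x * (s - x) ^ 2 := by
        rw [intervalIntegral.integral_of_le hs, integral_Ioc_eq_integral_Ioo,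
          ← integral_const_mul]
        congr 1 with x
        ring
    _ = m ^ 2 * s ^ 4 / 24 := by
        rw [integral_mul_sub_sq]
        ring

theorem FP4TT (s t : ℝ) (hs : 0 < s) (ht : 0 < t) :
    let T : Set (ℝ × ℝ) := convexHull ℝ {(0, 0), (s, 0), (s, t)}
    let P : Set (ℝ × ℝ) := {p | 0 < p.1 ∧ p.1 < s ∧ 0 < p.2 ∧ p.2 < t / s * p.1}
    (∫ w in P, (volume (T ∩ ((fun x => x + w) '' T))).toReal)
        = 1 / 6 * (volume T).toReal ^ 2 ∧
    (∫ w in P, (volume (T ∩ ((fun x => x + w) '' T))).toReal)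
        = s ^ 2 * t ^ 2 / 24 := by
  intro T P
  have hm : 0 ≤ t / s := by positivity
  have hT : T = rightTriangle 0 s 0 (t / s) := convexHull_eq_rightTriangle hs ht
  have hP : P = regionBetween 0 (fun x => t / s * x) (Ioo 0 s) := by
    ext; simp [P, regionBetween, and_assoc]
  have hPm : MeasurableSet P :=
    hP ▸ measurableSet_regionBetween measurable_const (by fun_prop) measurableSet_Ioo
  have hvolT : (volume T).toReal = s * t / 2 := by
    rw [hT, volume_rightTriangle 0 hs.le hm, ENNReal.toReal_ofReal (by positivity)]
    field_simp
    ring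
  have hoverlap : ∀ w ∈ P,
      (volume (T ∩ ((fun x => x + w) '' T))).toReal = t / s * (s - w.1) ^ 2 / 2 := by
    rintro w ⟨hw₁, hws, hw₂, hw⟩
    rw [hT, rightTriangle_inter_image_add _ _ _ _ hw₁.le hw₂.le hw.le,
      volume_rightTriangle _ (by linarith) hm, ENNReal.toReal_ofReal (by positivity)]
    ring_nf
  have hval : (∫ w in P, (volume (T ∩ ((fun x => x + w) '' T))).toReal) = s ^ 2 * t ^ 2 / 24 := by
    rw [setIntegral_congr_fun hPm hoverlap, hP, setIntegral_regionBetween_mul_sub_sq hs.le hm]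
    field_simp
  exact ⟨by rw [hval, hvolT]; ring, hval⟩
end

section
/- Let 0 ≤ s, t ≤ 1/2, let Q = [-1/2,1/2]², let T be the triangle with vertices (1/2 - s, 1/2), (1/2, 1/2), (1/2, 1/2 - t), and let H = Q \ (T ∪ (-T)). Writing F(A,B,C) = ∫_{a∈A} area(B ∩ (C + a)) da, one has F(H,H,H) = F(Q,Q,Q) - 4·F(H,H,T) - 2·F(H,T,T) - 2·F(T,Q,Q). -/
/-!
`Q` is the disjoint union of `H`, `T` and `-T`, and `F` is additive in each argument, so
expanding `F Q Q Q` gives a sum of terms in `H`, `T`, `-T`. Reflection gives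
`F (-A) (-B) (-C) = F A B C` and the substitution `x ↦ x + a` gives `F (-A) C B = F A B C`;
since `-Q = Q` and `-H = H` these identify the terms with the stated ones, except `F H T (-T)`
and `F H (-T) T`, which vanish: `T ∩ (-T + a) ≠ ∅` forces `a ∈ T + T`, and since `T` lies in the
corner triangle `x, y ≤ 1/2 ≤ x + y`, a sum of two of its points lies in `Q` only if it is the
corner `(1/2, 1/2) ∈ T`.
-/

open MeasureTheory

noncomputable def F (A B C : Set (ℝ × ℝ)) : ℝ :=
  ∫ a in A, (volume (B ∩ ((fun x => x + a) '' C))).toReal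

open Set ENNReal

section Overlap

variable {G : Type*} [MeasurableSpace G] [AddGroup G] [MeasurableAdd₂ G] [MeasurableNeg G]
  (μ : Measure G) [SFinite μ] {B C : Set G}

theorem measurable_measure_inter_image_add_right (hB : MeasurableSet B) (hC : MeasurableSet C) :
    Measurable fun a => μ (B ∩ (fun x => x + a) '' C) := by
  have hS : MeasurableSet {p : G × G | p.2 ∈ B ∧ p.2 + -p.1 ∈ C} :=
    (measurable_snd hB).inter ((measurable_snd.add measurable_fst.neg) hC)
  simp only [image_add_right]
  exact measurable_measure_prodMk_left hS

theorem integrableOn_measure_inter_image_add_right {A : Set G} (hB : MeasurableSet B)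
    (hC : MeasurableSet C) (hA : μ A ≠ ∞) (hBf : μ B ≠ ∞) :
    IntegrableOn (fun a => (μ (B ∩ (fun x => x + a) '' C)).toReal) A μ := by
  refine Integrable.mono' (integrableOn_const hA (C := (μ B).toReal))
    (measurable_measure_inter_image_add_right μ hB hC).ennreal_toReal.aestronglyMeasurable ?_
  filter_upwards with a
  rw [Real.norm_of_nonneg toReal_nonneg]
  exact toReal_mono hBf (measure_mono inter_subset_left)

end Overlap

section F

variable {A A₁ A₂ B B₁ B₂ C C₁ C₂ : Set (ℝ × ℝ)}

theorem F_neg (A B C : Set (ℝ × ℝ)) : F (-A) (-B) (-C) = F A B C := by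
  rw [F, F, ← image_neg_eq_neg, (Measure.measurePreserving_neg volume).setIntegral_image_emb
    (MeasurableEquiv.neg (ℝ × ℝ)).measurableEmbedding]
  refine integral_congr_ae (ae_of_all _ fun a => ?_)
  dsimp only
  rw [← Measure.measure_neg volume (B ∩ _)]
  congr 2
  ext x
  simp only [mem_inter_iff, mem_neg, image_add_right, mem_preimage, neg_neg, neg_add]

theorem F_swap (A B C : Set (ℝ × ℝ)) : F (-A) C B = F A B C := by
  rw [F, F, ← image_neg_eq_neg, (Measure.measurePreserving_neg volume).setIntegral_image_emb
    (MeasurableEquiv.neg (ℝ × ℝ)).measurableEmbedding]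
  refine integral_congr_ae (ae_of_all _ fun a => ?_)
  dsimp only
  rw [← measure_preimage_add_right volume a (B ∩ _), image_add_right']
  congr 2
  ext x
  simp only [mem_inter_iff, mem_preimage, image_add_right, add_neg_cancel_right, and_comm]

theorem F_union_left (h : Disjoint A₁ A₂) (hA₂ : MeasurableSet A₂) (hB : MeasurableSet B)
    (hC : MeasurableSet C) (hA₁f : volume A₁ ≠ ∞) (hA₂f : volume A₂ ≠ ∞) (hBf : volume B ≠ ∞) :
    F (A₁ ∪ A₂) B C = F A₁ B C + F A₂ B C :=
  setIntegral_union h hA₂ (integrableOn_measure_inter_image_add_right _ hB hC hA₁f hBf)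
    (integrableOn_measure_inter_image_add_right _ hB hC hA₂f hBf)

theorem F_union_mid (h : Disjoint B₁ B₂) (hB₁ : MeasurableSet B₁) (hB₂ : MeasurableSet B₂)
    (hC : MeasurableSet C) (hAf : volume A ≠ ∞) (hB₁f : volume B₁ ≠ ∞) (hB₂f : volume B₂ ≠ ∞) :
    F A (B₁ ∪ B₂) C = F A B₁ C + F A B₂ C := by
  rw [F, F, F, ← integral_add (integrableOn_measure_inter_image_add_right _ hB₁ hC hAf hB₁f)
    (integrableOn_measure_inter_image_add_right _ hB₂ hC hAf hB₂f)]
  refine integral_congr_ae (ae_of_all _ fun a => ?_)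
  have hCa : MeasurableSet ((fun x => x + a) '' C) := by
    rw [image_add_right]; exact measurable_add_const _ hC
  dsimp only
  rw [union_inter_distrib_right, measure_union (h.mono inter_subset_left inter_subset_left)
    (hB₂.inter hCa), toReal_add (measure_inter_lt_top_of_left_ne_top hB₁f).ne
    (measure_inter_lt_top_of_left_ne_top hB₂f).ne]

theorem F_union_right (h : Disjoint C₁ C₂) (hC₁ : MeasurableSet C₁) (hC₂ : MeasurableSet C₂)
    (hB : MeasurableSet B) (hAf : volume A ≠ ∞) (hC₁f : volume C₁ ≠ ∞) (hC₂f : volume C₂ ≠ ∞) :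
    F A B (C₁ ∪ C₂) = F A B C₁ + F A B C₂ := by
  rw [← F_swap, F_union_mid h hC₁ hC₂ hB (by rwa [Measure.measure_neg]) hC₁f hC₂f, F_swap, F_swap]

theorem F_eq_zero_of_forall_disjoint (h : ∀ a ∈ A, Disjoint B ((fun x => x + a) '' C)) :
    F A B C = 0 :=
  setIntegral_eq_zero_of_forall_eq_zero fun a ha => by
    rw [(h a ha).inter_eq, measure_empty, toReal_zero]

end F

theorem F_sdiff_union_neg_eq {Q T H : Set (ℝ × ℝ)} (hQ : MeasurableSet Q) (hQf : volume Q ≠ ∞)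
    (hQneg : -Q = Q) (hT : MeasurableSet T) (hTQ : T ⊆ Q) (hTneg : Disjoint T (-T))
    (hH : H = Q \ (T ∪ -T)) (hHT : F H T (-T) = 0) :
    F H H H = F Q Q Q - 4 * F H H T - 2 * F H T T - 2 * F T Q Q := by
  have hnegTQ : -T ⊆ Q := hQneg ▸ neg_subset_neg.mpr hTQ
  have hHQ : H ⊆ Q := hH ▸ sdiff_subset
  have hQH : Q = H ∪ (T ∪ -T) := by rw [hH, sdiff_union_of_subset (union_subset hTQ hnegTQ)]
  have hHneg : -H = H := by
    have hQp : ∀ p, -p ∈ Q ↔ p ∈ Q := fun p => by rw [← mem_neg, hQneg]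
    ext p
    simp only [hH, mem_neg, mem_sdiff, mem_union, neg_neg, hQp]
    tauto
  have hHm : MeasurableSet H := hH ▸ hQ.diff (hT.union hT.neg)
  have hdH : Disjoint H (T ∪ -T) := hH ▸ disjoint_sdiff_left
  have fin : ∀ {X}, X ⊆ Q → volume X ≠ ∞ := fun h => ne_top_of_le_ne_top hQf (measure_mono h)
  have split_left : ∀ {B C}, MeasurableSet B → MeasurableSet C → B ⊆ Q →
      F Q B C = F H B C + F T B C + F (-T) B C := by
    intro B C hB hC hBQ
    rw [hQH, F_union_left hdH (hT.union hT.neg) hB hC (fin hHQ) (fin (union_subset hTQ hnegTQ))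
      (fin hBQ), F_union_left hTneg hT.neg hB hC (fin hTQ) (fin hnegTQ) (fin hBQ), add_assoc]
  have split_mid : ∀ {A C}, MeasurableSet C → A ⊆ Q →
      F A Q C = F A H C + F A T C + F A (-T) C := by
    intro A C hC hAQ
    rw [hQH, F_union_mid hdH hHm (hT.union hT.neg) hC (fin hAQ) (fin hHQ)
      (fin (union_subset hTQ hnegTQ)), F_union_mid hTneg hT hT.neg hC (fin hAQ) (fin hTQ)
      (fin hnegTQ), add_assoc]
  have split_right : ∀ {A B}, MeasurableSet B → A ⊆ Q →
      F A B Q = F A B H + F A B T + F A B (-T) := by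
    intro A B hB hAQ
    rw [hQH, F_union_right hdH hHm (hT.union hT.neg) hB (fin hAQ) (fin hHQ)
      (fin (union_subset hTQ hnegTQ)), F_union_right hTneg hT hT.neg hB (fin hAQ) (fin hTQ)
      (fin hnegTQ), add_assoc]
  have hHnegT : F H (-T) T = 0 := by rw [← F_neg, hHneg, neg_neg, hHT]
  linarith [split_left hQ hQ subset_rfl, split_mid hQ hHQ, split_right hHm hHQ,
    split_right hT hHQ, split_right hT.neg hHQ,
    show F (-T) Q Q = F T Q Q by rw [← F_neg, neg_neg, hQneg],
    show F H H (-T) = F H H T by rw [← F_neg, hHneg, neg_neg],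
    show F H T H = F H H T by rw [← F_swap, hHneg],
    show F H (-T) H = F H H T by rw [← F_swap, hHneg, ← F_neg, hHneg, neg_neg],
    show F H (-T) (-T) = F H T T by rw [← F_neg, hHneg, neg_neg]]

def cornerTriangle : Set (ℝ × ℝ) := {p | p.1 ≤ 1/2 ∧ p.2 ≤ 1/2 ∧ 1/2 ≤ p.1 + p.2}

theorem convex_cornerTriangle : Convex ℝ cornerTriangle :=
  (convex_halfSpace_le (LinearMap.fst ℝ ℝ ℝ).isLinear _).inter
    ((convex_halfSpace_le (LinearMap.snd ℝ ℝ ℝ).isLinear _).inter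
      (convex_halfSpace_ge (LinearMap.fst ℝ ℝ ℝ + LinearMap.snd ℝ ℝ ℝ).isLinear _))

theorem cornerTriangle_subset_Icc : cornerTriangle ⊆ Icc (-1/2, -1/2) (1/2, 1/2) := by
  rintro p ⟨h1, h2, h12⟩
  refine ⟨⟨?_, ?_⟩, h1, h2⟩ <;> dsimp only <;> linarith

theorem disjoint_cornerTriangle_neg : Disjoint cornerTriangle (-cornerTriangle) := by
  rw [disjoint_left]
  rintro p ⟨-, -, hp⟩ ⟨-, -, hp'⟩
  simp only [Prod.fst_neg, Prod.snd_neg] at hp'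
  linarith

theorem add_eq_of_mem_cornerTriangle {x y : ℝ × ℝ} (hx : x ∈ cornerTriangle)
    (hy : y ∈ cornerTriangle) (h : x + y ≤ (1/2, 1/2)) : x + y = (1/2, 1/2) := by
  obtain ⟨-, -, hx⟩ := hx
  obtain ⟨-, -, hy⟩ := hy
  obtain ⟨h1, h2⟩ := h
  simp only [Prod.fst_add, Prod.snd_add] at h1 h2
  ext <;> simp only [Prod.fst_add, Prod.snd_add] <;> linarith

theorem F_neg_eq_zero_of_subset_cornerTriangle {A T : Set (ℝ × ℝ)} (hT : T ⊆ cornerTriangle)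
    (hcorner : (1/2, 1/2) ∈ T) (hA : A ⊆ Iic (1/2, 1/2) \ T) : F A T (-T) = 0 := by
  refine F_eq_zero_of_forall_disjoint fun a ha => disjoint_left.mpr ?_
  rintro _ hx ⟨y, hy, rfl⟩
  change y + a ∈ T at hx
  have hya : y + a + -y = a := by abel
  have ha_corner := add_eq_of_mem_cornerTriangle (hT hx) (hT hy) (by rw [hya]; exact (hA ha).1)
  exact (hA ha).2 (by rw [← hya, ha_corner]; exact hcorner)

theorem convexHull_subset_cornerTriangle {s t : ℝ} (hs : 0 ≤ s) (hs' : s ≤ 1/2) (ht : 0 ≤ t)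
    (ht' : t ≤ 1/2) :
    convexHull ℝ {(1/2 - s, 1/2), (1/2, 1/2), ((1/2 : ℝ), 1/2 - t)} ⊆ cornerTriangle := by
  refine convexHull_min ?_ convex_cornerTriangle
  simp only [insert_subset_iff, singleton_subset_iff]
  refine ⟨⟨?_, ?_, ?_⟩, ⟨?_, ?_, ?_⟩, ⟨?_, ?_, ?_⟩⟩ <;> dsimp only <;> linarith

theorem F_separation (s t : ℝ) (hs : 0 ≤ s) (hs' : s ≤ 1/2) (ht : 0 ≤ t) (ht' : t ≤ 1/2) :
    let Q : Set (ℝ × ℝ) := Set.Icc (-1/2, -1/2) (1/2, 1/2)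
    let T : Set (ℝ × ℝ) :=
      convexHull ℝ {(1/2 - s, 1/2), (1/2, 1/2), ((1/2 : ℝ), 1/2 - t)}
    let H : Set (ℝ × ℝ) := Q \ (T ∪ (fun x => -x) '' T)
    F H H H = F Q Q Q - 4 * F H H T - 2 * F H T T - 2 * F T Q Q := by
  intro Q T H
  have hTc : T ⊆ cornerTriangle := convexHull_subset_cornerTriangle hs hs' ht ht'
  have hH : H = Q \ (T ∪ -T) := by rw [← image_neg_eq_neg]
  have hQneg : -Q = Q := by simp only [Q, neg_Icc]; norm_num
  have hTm : MeasurableSet T := ((toFinite _).isCompact_convexHull ℝ).measurableSet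
  have hTneg : Disjoint T (-T) := disjoint_cornerTriangle_neg.mono hTc (neg_subset_neg.mpr hTc)
  have hHQ : H ⊆ Iic (1/2, 1/2) \ T := hH ▸ sdiff_subset_sdiff Icc_subset_Iic_self subset_union_left
  exact F_sdiff_union_neg_eq measurableSet_Icc measure_Icc_lt_top.ne hQneg hTm
    (hTc.trans cornerTriangle_subset_Icc) hTneg hH
    (F_neg_eq_zero_of_subset_cornerTriangle hTc (subset_convexHull ℝ _ (by simp)) hHQ)
end
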